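/- arXiv:math/0009102 — 2 statements merged into one kernel-verified Lean document; each statement's English description precedes it below -/
import Mathlib

section
/- (Averaging two coordinates strictly increases the entropy) Let n ≥ 2, let q = (q_1,…,q_n) ∈ [0,1]^n, and let l ≠ m be indices with q_l ≠ q_m. Let q̄ be the vector obtained from q by replacing both q_l and q_m with (q_l + q_m)/2. Then H(Z_q) < H(Z_{q̄}). Consequently, the function H(Z_p) restricted to the line {q + t(e_l − e_m) : t ∈ ℝ, q + t(e_l − e_m) ∈ [0,1]^n} has a unique maximum, attained where coordinates l and m are equal. -/
open Finset

/-- `b(k,p)`: the Poisson–binomial probability mass function. -/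
noncomputable def pbin (n : ℕ) (p : Fin n → ℝ) (k : ℤ) : ℝ :=
  ∑ A ∈ Finset.univ.powerset.filter (fun A : Finset (Fin n) => (A.card : ℤ) = k),
    (∏ i ∈ A, p i) * ∏ j ∈ Aᶜ, (1 - p j)

/-- Shannon entropy (base 2) of the Poisson–binomial distribution. -/
noncomputable def pbinEnt (n : ℕ) (p : Fin n → ℝ) : ℝ :=
  -∑ k ∈ Finset.range (n + 1), pbin n p k * Real.logb 2 (pbin n p k)

/-!
Write `b(·, p)` as the law `f` of the coins outside `{l, m}`, convolved with the two coins `p l`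
and `p m`; let `u` be the law obtained with both coins replaced by their mean. Then
`u - b(·, p) = ((p l - p m) / 2)² • Δ²f` with `Δ²f k = f k - 2 f (k - 1) + f (k - 2)`. The tangent
line bound for the concave function `-x log x` gives
`H(b(·, p)) ≤ H(u) + Σₖ (log u k + 1) (u k - b(k, p))`, strictly, because `Δ²f` does not vanish
at the least point of the support of `f`. Summation by parts turns the correction term into a
nonnegative multiple of `Σₖ f k (log u k - 2 log u (k + 1) + log u (k + 2))`, which is `≤ 0`
since `u` is a Poisson–binomial law and therefore log-concave.
-/

def bernoulliConv (p : ℝ) (f : ℤ → ℝ) (k : ℤ) : ℝ :=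
  (1 - p) * f k + p * f (k - 1)

section bernoulliConv

variable {p : ℝ} {f : ℤ → ℝ} {k : ℤ}

lemma bernoulliConv_nonneg (hp : p ∈ Set.Icc (0 : ℝ) 1) (hf : ∀ j, 0 ≤ f j) (k : ℤ) :
    0 ≤ bernoulliConv p f k := by
  have := hf k; have := hf (k - 1)
  unfold bernoulliConv
  nlinarith [hp.1, hp.2]

lemma bernoulliConv_pos (hp : p ∈ Set.Ioo (0 : ℝ) 1) (hf : ∀ j, 0 ≤ f j) (hk : 0 < f k) :
    0 < bernoulliConv p f k ∧ 0 < bernoulliConv p f (k + 1) := by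
  have := hf (k - 1); have := hf (k + 1)
  unfold bernoulliConv
  rw [add_sub_cancel_right]
  constructor <;> nlinarith [hp.1, hp.2]

lemma bernoulliConv_eq_zero (hp : p ∈ Set.Ioo (0 : ℝ) 1) (hf : ∀ j, 0 ≤ f j)
    (hk : bernoulliConv p f k = 0) : f k = 0 ∧ f (k - 1) = 0 := by
  have := hf k; have := hf (k - 1)
  unfold bernoulliConv at hk
  constructor <;> nlinarith [hp.1, hp.2]

lemma bernoulliConv_bernoulliConv (a b : ℝ) (f : ℤ → ℝ) (k : ℤ) :
    bernoulliConv a (bernoulliConv b f) k =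
      bernoulliConv ((a + b) / 2) (bernoulliConv ((a + b) / 2) f) k
        - ((a - b) / 2) ^ 2 * (f k - 2 * f (k - 1) + f (k - 2)) := by
  simp only [bernoulliConv, sub_sub, one_add_one_eq_two]
  ring

end bernoulliConv

/-- Log-concavity in the strong form `f (k - 1) * f (l + 1) ≤ f k * f l` for all `k ≤ l`: unlike
`f (k - 1) * f (k + 1) ≤ f k ^ 2` alone, it also controls sequences with internal zeros, and it is
preserved by `bernoulliConv`. -/
structure LogConcave (f : ℤ → ℝ) : Prop where
  nonneg : ∀ k, 0 ≤ f k
  mul_le : ∀ ⦃k l : ℤ⦄, k ≤ l → f (k - 1) * f (l + 1) ≤ f k * f l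

namespace LogConcave

variable {f : ℤ → ℝ}

lemma mul_le_of_le (hf : LogConcave f) {k l : ℤ} (hkl : k ≤ l) :
    f (k - 2) * f (l + 1) ≤ f k * f (l - 1) := by
  have h := hf.mul_le (show k - 1 ≤ l by omega)
  rw [sub_sub, one_add_one_eq_two] at h
  rcases hkl.eq_or_lt with rfl | hlt
  · linarith
  · have h' := hf.mul_le (show k ≤ l - 1 by omega)
    rw [sub_add_cancel] at h'
    linarith

lemma log_add_log_le (hf : LogConcave f) {k : ℤ} (h0 : 0 < f k) (h2 : 0 < f (k + 2)) :
    Real.log (f k) + Real.log (f (k + 2)) ≤ 2 * Real.log (f (k + 1)) := by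
  have h := hf.mul_le (le_refl (k + 1))
  rw [add_sub_cancel_right, add_assoc, one_add_one_eq_two, ← sq] at h
  calc Real.log (f k) + Real.log (f (k + 2)) = Real.log (f k * f (k + 2)) :=
        (Real.log_mul h0.ne' h2.ne').symm
    _ ≤ Real.log (f (k + 1) ^ 2) := Real.log_le_log (mul_pos h0 h2) h
    _ = 2 * Real.log (f (k + 1)) := by simp [Real.log_pow]

lemma bernoulliConv (hf : LogConcave f) {p : ℝ} (hp : p ∈ Set.Icc (0 : ℝ) 1) :
    LogConcave (bernoulliConv p f) where
  nonneg := bernoulliConv_nonneg hp hf.nonneg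
  mul_le k l hkl := by
    have h1 := mul_le_mul_of_nonneg_left (hf.mul_le hkl) (sq_nonneg (1 - p))
    have h2 := mul_le_mul_of_nonneg_left (hf.mul_le (show k - 1 ≤ l - 1 by omega))
      (sq_nonneg p)
    have h3 := mul_le_mul_of_nonneg_left (hf.mul_le_of_le hkl)
      (mul_nonneg hp.1 (sub_nonneg.2 hp.2))
    simp only [_root_.bernoulliConv, sub_sub, one_add_one_eq_two, sub_add_cancel,
      add_sub_cancel_right] at h1 h2 h3 ⊢
    linarith

end LogConcave

lemma logConcave_pointMass_zero : LogConcave (fun k => if k = 0 then 1 else 0) where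
  nonneg k := by split_ifs <;> norm_num
  mul_le k l hkl := by
    split_ifs <;> first | omega | norm_num

section pbinOn

variable {ι : Type*} [DecidableEq ι]

noncomputable def pbinOn (p : ι → ℝ) (S : Finset ι) (k : ℤ) : ℝ :=
  ∑ A ∈ S.powerset.filter (fun A => (A.card : ℤ) = k), (∏ i ∈ A, p i) * ∏ j ∈ S \ A, (1 - p j)

lemma pbinOn_univ (n : ℕ) (p : Fin n → ℝ) : pbinOn p univ = pbin n p := by
  ext k
  simp only [pbinOn, pbin, compl_eq_univ_sdiff]

lemma pbinOn_congr {p r : ι → ℝ} {S : Finset ι} (h : ∀ i ∈ S, p i = r i) :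
    pbinOn p S = pbinOn r S := by
  ext k
  refine sum_congr rfl fun A hA => ?_
  have hAS := mem_powerset.1 (mem_filter.1 hA).1
  rw [prod_congr rfl fun i hi => h i (hAS hi),
    prod_congr rfl fun j hj => congrArg (1 - ·) (h j (mem_sdiff.1 hj).1)]

lemma pbinOn_empty (p : ι → ℝ) : pbinOn p ∅ = fun k => if k = 0 then 1 else 0 := by
  ext k
  by_cases hk : k = 0 <;> simp [pbinOn, hk, filter_singleton, eq_comm]

lemma pbinOn_insert (p : ι → ℝ) {a : ι} {S : Finset ι} (ha : a ∉ S) :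
    pbinOn p (insert a S) = bernoulliConv (p a) (pbinOn p S) := by
  ext k
  simp only [pbinOn, bernoulliConv, sum_filter, sum_powerset_insert ha, mul_sum,
    ← sum_add_distrib]
  refine sum_congr rfl fun A hA => ?_
  have haA : a ∉ A := fun h => ha (mem_powerset.1 hA h)
  have haSA : a ∉ S \ A := fun h => ha (mem_sdiff.1 h).1
  rw [insert_sdiff_of_notMem _ haA, insert_sdiff_insert, sdiff_insert_of_notMem ha,
    prod_insert haSA, prod_insert haA, card_insert_of_notMem haA]
  push_cast
  by_cases hk : (A.card : ℤ) = k
  · rw [if_pos hk, if_pos hk, if_neg (by omega), if_neg (by omega)]; ring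
  · rw [if_neg hk, if_neg hk]
    by_cases hk' : (A.card : ℤ) + 1 = k
    · rw [if_pos hk', if_pos (by omega)]; ring
    · rw [if_neg hk', if_neg (by omega)]; ring

lemma pbinOn_eq_zero (p : ι → ℝ) (S : Finset ι) {k : ℤ} (hk : k < 0 ∨ (S.card : ℤ) < k) :
    pbinOn p S k = 0 := by
  refine sum_eq_zero fun A hA => absurd (mem_filter.1 hA).2 ?_
  have := card_le_card (mem_powerset.1 (mem_filter.1 hA).1)
  omega

lemma sum_pbinOn (p : ι → ℝ) (S : Finset ι) :
    ∑ k ∈ range (S.card + 1), pbinOn p S k = 1 := by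
  calc ∑ k ∈ range (S.card + 1), pbinOn p S k
      = ∑ k ∈ range (S.card + 1), ∑ A ∈ S.powerset with A.card = k,
          (∏ i ∈ A, p i) * ∏ j ∈ S \ A, (1 - p j) := by simp only [pbinOn, Nat.cast_inj]
    _ = ∑ A ∈ S.powerset, (∏ i ∈ A, p i) * ∏ j ∈ S \ A, (1 - p j) :=
        sum_fiberwise_of_maps_to (fun A hA =>
          mem_range.2 (Nat.lt_succ_of_le (card_le_card (mem_powerset.1 hA)))) _
    _ = ∏ i ∈ S, (p i + (1 - p i)) := (prod_add _ _ _).symm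
    _ = 1 := by simp

lemma logConcave_pbinOn {p : ι → ℝ} {S : Finset ι} (hp : ∀ i ∈ S, p i ∈ Set.Icc (0 : ℝ) 1) :
    LogConcave (pbinOn p S) := by
  induction S using Finset.induction_on with
  | empty => rw [pbinOn_empty]; exact logConcave_pointMass_zero
  | insert a S ha ih =>
    rw [pbinOn_insert p ha]
    exact (ih fun i hi => hp i (mem_insert_of_mem hi)).bernoulliConv (hp a (mem_insert_self a S))

end pbinOn

lemma pbin_eq_bernoulliConv {n : ℕ} (p : Fin n → ℝ) {l m : Fin n} (hlm : l ≠ m) :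
    pbin n p = bernoulliConv (p l) (bernoulliConv (p m) (pbinOn p {l, m}ᶜ)) := by
  have hm : m ∉ ({l, m}ᶜ : Finset (Fin n)) := by simp
  have hl : l ∉ insert m ({l, m}ᶜ : Finset (Fin n)) := by simp [hlm]
  have huniv : insert l (insert m ({l, m}ᶜ : Finset (Fin n))) = univ := by
    ext x; by_cases x = l <;> by_cases x = m <;> simp_all
  rw [← pbinOn_univ, ← huniv, pbinOn_insert p hl, pbinOn_insert p hm]

section negMulLog

open Real InformationTheory

variable {u v : ℝ}

lemma negMulLog_tangent_sub_eq (hu : 0 < u) (v : ℝ) :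
    negMulLog u + (log u + 1) * (u - v) - negMulLog v = u * klFun (v / u) := by
  rcases eq_or_ne v 0 with rfl | hv
  · simp only [klFun, negMulLog, zero_div, mul_zero, log_zero, neg_zero, sub_zero]
    ring
  · rw [klFun, log_div hv hu.ne', negMulLog, negMulLog]
    field_simp
    ring

lemma negMulLog_le_tangent (hu : 0 < u) (hv : 0 ≤ v) :
    negMulLog v ≤ negMulLog u + (log u + 1) * (u - v) := by
  have := mul_nonneg hu.le (klFun_nonneg (div_nonneg hv hu.le))
  linarith [negMulLog_tangent_sub_eq hu v]

lemma negMulLog_lt_tangent (hu : 0 < u) (hv : 0 ≤ v) (hvu : v ≠ u) :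
    negMulLog v < negMulLog u + (log u + 1) * (u - v) := by
  have hkl : klFun (v / u) ≠ 0 := by
    rwa [Ne, klFun_eq_zero_iff (div_nonneg hv hu.le), div_eq_one_iff_eq hu.ne']
  have := mul_pos hu ((klFun_nonneg (div_nonneg hv hu.le)).lt_of_ne' hkl)
  linarith [negMulLog_tangent_sub_eq hu v]

lemma sum_negMulLog_lt_sum_tangent {ι : Type*} {s : Finset ι} {u v : ι → ℝ}
    (hu : ∀ i ∈ s, 0 ≤ u i) (hv : ∀ i ∈ s, 0 ≤ v i) (huv : ∀ i ∈ s, u i = 0 → v i = 0)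
    (hne : ∃ i ∈ s, v i ≠ u i) :
    ∑ i ∈ s, negMulLog (v i) < ∑ i ∈ s, (negMulLog (u i) + (log (u i) + 1) * (u i - v i)) := by
  have hpos : ∀ i ∈ s, v i ≠ u i → 0 < u i := fun i hi h =>
    (hu i hi).lt_of_ne' fun h0 => h (by rw [h0, huv i hi h0])
  refine sum_lt_sum (fun i hi => ?_) ?_
  · by_cases h : v i = u i
    · simp [h]
    · exact negMulLog_le_tangent (hpos i hi h) (hv i hi)
  · obtain ⟨i, hi, h⟩ := hne
    exact ⟨i, hi, negMulLog_lt_tangent (hpos i hi h) (hv i hi) h⟩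

end negMulLog

lemma sum_range_mul_shift (f g : ℤ → ℝ) (N : ℕ) (h0 : f (-1) = 0) (hN : f N = 0) :
    ∑ k ∈ range (N + 1), f (k - 1) * g k = ∑ k ∈ range (N + 1), f k * g (k + 1) := by
  rw [sum_range_succ', sum_range_succ]
  simp [h0, hN]

lemma sum_range_secondDiff_mul (f g : ℤ → ℝ) (N : ℕ) (hf0 : ∀ k < 0, f k = 0)
    (hfN : ∀ k : ℤ, N < k + 2 → f k = 0) :
    ∑ k ∈ range (N + 1), (f k - 2 * f (k - 1) + f (k - 2)) * g k
      = ∑ k ∈ range (N + 1), f k * (g k - 2 * g (k + 1) + g (k + 2)) := by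
  have h1 := sum_range_mul_shift f g N (hf0 _ (by norm_num)) (hfN _ (by omega))
  have h2 := sum_range_mul_shift (fun j => f (j - 1)) g N (hf0 _ (by norm_num)) (hfN _ (by omega))
  have h3 := sum_range_mul_shift f (fun j => g (j + 1)) N (hf0 _ (by norm_num)) (hfN _ (by omega))
  simp only [sub_sub, one_add_one_eq_two, add_assoc] at h2 h3
  simp only [add_mul, sub_mul, mul_add, mul_sub, sum_add_distrib, sum_sub_distrib, mul_assoc,
    ← mul_sum, mul_left_comm _ (2 : ℝ)]
  rw [h1, h2, h3]

lemma exists_secondDiff_ne_zero {f : ℤ → ℝ} {N : ℕ} (hf0 : ∀ k < 0, f k = 0)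
    (hfN : ∀ k : ℤ, N < k + 2 → f k = 0) (hf : ∃ k, f k ≠ 0) :
    ∃ k ∈ range (N + 1), f k - 2 * f (k - 1) + f (k - 2) ≠ 0 := by
  obtain ⟨k, hk, hmin⟩ := Int.exists_least_of_bdd
    ⟨0, fun z hz => not_lt.1 fun h => hz (hf0 z h)⟩ hf
  have hk0 : 0 ≤ k := not_lt.1 fun h => hk (hf0 k h)
  have hkN : k + 2 ≤ N := not_lt.1 fun h => hk (hfN k h)
  have hbelow : ∀ j < k, f j = 0 := fun j hj => by_contra fun h => (hmin j h).not_gt hj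
  lift k to ℕ using hk0
  refine ⟨k, mem_range.2 (by omega), ?_⟩
  rwa [hbelow (k - 1) (by omega), hbelow (k - 2) (by omega), mul_zero, sub_zero, add_zero]

lemma sum_secondDiff_mul_log_bernoulliConv_nonpos {f : ℤ → ℝ} (hf : LogConcave f) {N : ℕ}
    (hf0 : ∀ k < 0, f k = 0) (hfN : ∀ k : ℤ, N < k + 2 → f k = 0)
    {c : ℝ} (hc : c ∈ Set.Ioo (0 : ℝ) 1) :
    ∑ k ∈ range (N + 1), (f k - 2 * f (k - 1) + f (k - 2)) *
      (Real.log (bernoulliConv c (bernoulliConv c f) k) + 1) ≤ 0 := by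
  have hfc := hf.bernoulliConv (Set.Ioo_subset_Icc_self hc)
  have hu := hfc.bernoulliConv (Set.Ioo_subset_Icc_self hc)
  rw [sum_range_secondDiff_mul f (fun k => Real.log (bernoulliConv c (bernoulliConv c f) k) + 1) N
    hf0 hfN]
  refine sum_nonpos fun k _ => ?_
  rcases (hf.nonneg k).eq_or_lt with h | h
  · rw [← h, zero_mul]
  · obtain ⟨h0, h1⟩ := bernoulliConv_pos hc hf.nonneg h
    have hu0 := (bernoulliConv_pos hc hfc.nonneg h0).1
    have hu2 := (bernoulliConv_pos hc hfc.nonneg h1).2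
    rw [add_assoc, one_add_one_eq_two] at hu2
    have := hu.log_add_log_le hu0 hu2
    exact mul_nonpos_of_nonneg_of_nonpos h.le (by linarith)

theorem sum_negMulLog_bernoulliConv_lt {f : ℤ → ℝ} (hf : LogConcave f) {N : ℕ}
    (hf0 : ∀ k < 0, f k = 0) (hfN : ∀ k : ℤ, N < k + 2 → f k = 0) (hf_ne : ∃ k, f k ≠ 0)
    {a b : ℝ} (ha : a ∈ Set.Icc (0 : ℝ) 1) (hb : b ∈ Set.Icc (0 : ℝ) 1) (hab : a ≠ b) :
    ∑ k ∈ range (N + 1), Real.negMulLog (bernoulliConv a (bernoulliConv b f) k) <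
      ∑ k ∈ range (N + 1),
        Real.negMulLog (bernoulliConv ((a + b) / 2) (bernoulliConv ((a + b) / 2) f) k) := by
  have hc : (a + b) / 2 ∈ Set.Ioo (0 : ℝ) 1 := by
    constructor <;> by_contra h <;> apply hab <;> linarith [ha.1, ha.2, hb.1, hb.2]
  have hδ : 0 < ((a - b) / 2) ^ 2 := by
    have : (a - b) / 2 ≠ 0 := div_ne_zero (sub_ne_zero.2 hab) two_ne_zero
    positivity
  have hc' := Set.Ioo_subset_Icc_self hc
  set c := (a + b) / 2
  set u := bernoulliConv c (bernoulliConv c f)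
  set v := bernoulliConv a (bernoulliConv b f)
  set δ := ((a - b) / 2) ^ 2
  have hvu (k : ℤ) : v k = u k - δ * (f k - 2 * f (k - 1) + f (k - 2)) :=
    bernoulliConv_bernoulliConv a b f k
  have hfc := hf.bernoulliConv hc'
  have huv (k : ℤ) (hk : u k = 0) : v k = 0 := by
    obtain ⟨h0, h1⟩ := bernoulliConv_eq_zero hc hfc.nonneg hk
    obtain ⟨e0, e1⟩ := bernoulliConv_eq_zero hc hf.nonneg h0
    obtain ⟨-, e2⟩ := bernoulliConv_eq_zero hc hf.nonneg h1
    rw [sub_sub, one_add_one_eq_two] at e2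
    rw [hvu, hk, e0, e1, e2]
    ring
  have hne : ∃ k ∈ range (N + 1), v k ≠ u k := by
    obtain ⟨k, hk, hD⟩ := exists_secondDiff_ne_zero hf0 hfN hf_ne
    exact ⟨k, hk, by rw [hvu, Ne, sub_eq_self]; exact mul_ne_zero hδ.ne' hD⟩
  calc ∑ k ∈ range (N + 1), Real.negMulLog (v k)
      < ∑ k ∈ range (N + 1), (Real.negMulLog (u k) + (Real.log (u k) + 1) * (u k - v k)) :=
        sum_negMulLog_lt_sum_tangent (fun k _ => (hfc.bernoulliConv hc').nonneg k)
          (fun k _ => ((hf.bernoulliConv hb).bernoulliConv ha).nonneg k) (fun k _ => huv k) hne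
    _ = ∑ k ∈ range (N + 1), Real.negMulLog (u k) + δ * ∑ k ∈ range (N + 1),
          (f k - 2 * f (k - 1) + f (k - 2)) * (Real.log (u k) + 1) := by
        rw [sum_add_distrib, mul_sum]
        refine congrArg _ (sum_congr rfl fun k _ => ?_)
        rw [hvu]
        ring
    _ ≤ ∑ k ∈ range (N + 1), Real.negMulLog (u k) := add_le_of_nonpos_right
        (mul_nonpos_of_nonneg_of_nonpos hδ.le
          (sum_secondDiff_mul_log_bernoulliConv_nonpos hf hf0 hfN hc))

lemma pbinEnt_eq_sum_negMulLog (n : ℕ) (p : Fin n → ℝ) :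
    pbinEnt n p = (∑ k ∈ range (n + 1), Real.negMulLog (pbin n p k)) / Real.log 2 := by
  simp only [pbinEnt, Real.negMulLog, Real.logb, sum_div, ← sum_neg_distrib, neg_mul, neg_div,
    mul_div_assoc]

theorem pbinEnt_lt_of_average {n : ℕ} {p r : Fin n → ℝ} {l m : Fin n} (hlm : l ≠ m)
    (hp : ∀ i, p i ∈ Set.Icc (0 : ℝ) 1) (hne : p l ≠ p m) (hrl : r l = (p l + p m) / 2)
    (hrm : r m = (p l + p m) / 2) (hr : ∀ i, i ≠ l → i ≠ m → r i = p i) :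
    pbinEnt n p < pbinEnt n r := by
  set S : Finset (Fin n) := {l, m}ᶜ
  have hS : S.card + 2 = n := by
    rw [← card_pair hlm, card_compl_add_card, Fintype.card_fin]
  have hrS : pbinOn r S = pbinOn p S := pbinOn_congr fun i hi => by
    simp only [S, mem_compl, mem_insert, mem_singleton, not_or] at hi
    exact hr i hi.1 hi.2
  have hS_ne : ∃ k, pbinOn p S k ≠ 0 := by
    obtain ⟨k, -, hk⟩ := exists_ne_zero_of_sum_ne_zero ((sum_pbinOn p S).trans_ne one_ne_zero)
    exact ⟨k, hk⟩
  rw [pbinEnt_eq_sum_negMulLog, pbinEnt_eq_sum_negMulLog, pbin_eq_bernoulliConv p hlm,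
    pbin_eq_bernoulliConv r hlm, hrl, hrm, hrS]
  refine div_lt_div_of_pos_right ?_ (Real.log_pos one_lt_two)
  exact sum_negMulLog_bernoulliConv_lt (logConcave_pbinOn fun i _ => hp i)
    (fun k hk => pbinOn_eq_zero p S (.inl hk)) (fun k hk => pbinOn_eq_zero p S (.inr (by omega)))
    hS_ne (hp l) (hp m) hne

theorem entropy_lt_of_average_two_coords_general (n : ℕ) (q : Fin n → ℝ)
    (hq : ∀ i, q i ∈ Set.Icc (0 : ℝ) 1) (l m : Fin n) (hlm : l ≠ m)
    (hne : q l ≠ q m)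
    (qbar : Fin n → ℝ)
    (hqbar : qbar = Function.update (Function.update q l ((q l + q m) / 2)) m
      ((q l + q m) / 2))
    (u : Fin n → ℝ)
    (hu : u = fun i => if i = l then 1 else if i = m then -1 else 0) :
    pbinEnt n q < pbinEnt n qbar ∧
      ∀ t : ℝ, (∀ i, q i + t * u i ∈ Set.Icc (0 : ℝ) 1) →
        (fun i => q i + t * u i) ≠ qbar →
        pbinEnt n (fun i => q i + t * u i) < pbinEnt n qbar := by
  have hl : qbar l = (q l + q m) / 2 := by simp [hqbar, hlm]
  have hm : qbar m = (q l + q m) / 2 := by simp [hqbar]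
  have hrest (i : Fin n) (hil : i ≠ l) (him : i ≠ m) : qbar i = q i := by simp [hqbar, hil, him]
  refine ⟨pbinEnt_lt_of_average hlm hq hne hl hm hrest, fun t ht hline => ?_⟩
  subst hu
  have hpl : q l + t * (if l = l then 1 else if l = m then -1 else 0) = q l + t := by simp
  have hpm : q m + t * (if m = l then 1 else if m = m then -1 else 0) = q m - t := by
    simp [hlm.symm, sub_eq_add_neg]
  refine pbinEnt_lt_of_average hlm ht ?_ (by rw [hl, hpl, hpm]; ring) (by rw [hm, hpl, hpm]; ring)
    fun i hil him => by simp [hrest i hil him, hil, him]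
  rw [hpl, hpm]
  intro heq
  refine hline (funext fun i => ?_)
  by_cases hil : i = l
  · subst hil; rw [hl, hpl]; linarith
  · by_cases him : i = m
    · subst him; rw [hm, hpm]; linarith
    · simp [hrest i hil him, hil, him]

/-- Averaging two (distinct) coordinates strictly increases the entropy;
consequently the entropy restricted to the line `q + t·(e_l − e_m)` inside the
cube has a unique maximum, attained where coordinates `l` and `m` are equal. -/
theorem entropy_lt_of_average_two_coords (n : ℕ) (hn : 2 ≤ n) (q : Fin n → ℝ)
    (hq : ∀ i, q i ∈ Set.Icc (0 : ℝ) 1) (l m : Fin n) (hlm : l ≠ m)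
    (hne : q l ≠ q m)
    (qbar : Fin n → ℝ)
    (hqbar : qbar = Function.update (Function.update q l ((q l + q m) / 2)) m
      ((q l + q m) / 2))
    (u : Fin n → ℝ)
    (hu : u = fun i => if i = l then 1 else if i = m then -1 else 0) :
    pbinEnt n q < pbinEnt n qbar ∧
      ∀ t : ℝ, (∀ i, q i + t * u i ∈ Set.Icc (0 : ℝ) 1) →
        (fun i => q i + t * u i) ≠ qbar →
        pbinEnt n (fun i => q i + t * u i) < pbinEnt n qbar :=
  entropy_lt_of_average_two_coords_general n q hq l m hlm hne qbar hqbar u hu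
end

section
/- (Strict discrete log-concavity) Let n ≥ 2 and p = (p_1,…,p_n) with 0 < p_i < 1 for all i. Then for every k with 2 ≤ k ≤ n, Δ²_k(log₂ b(k,p)) < 0, i.e., log₂ b(k,p) − 2·log₂ b(k−1,p) + log₂ b(k−2,p) < 0. -/
/-!
Adding an index `a` with probability `q` turns `b` into `c k = (1 - q) b k + q b (k - 1)`, and
the gap `c k ^ 2 - c (k - 1) c (k + 1)` splits as `(1 - q)²` times the gap of `b` at `k`, plus
`q²` times its gap at `k - 1`, plus `q (1 - q) (b (k - 1) b k - b (k - 2) b (k + 1))`. The last term is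
nonnegative because `b` is log-concave with no internal zeros, and on the support of `c` one of
the first two gaps is positive, so strict log-concavity propagates by induction on the index set.
-/

open Finset

section LogConcave

variable {a c : ℤ → ℝ} {m n : ℤ}

theorem mul_le_sq_of_mul_lt_sq_on_Icc (hzero : ∀ k ∉ Set.Icc m n, a k = 0)
    (hlt : ∀ k ∈ Set.Icc m n, a (k - 1) * a (k + 1) < a k ^ 2) (k : ℤ) :
    a (k - 1) * a (k + 1) ≤ a k ^ 2 := by
  by_cases hk : k ∈ Set.Icc m n
  · exact (hlt k hk).le
  rw [Set.mem_Icc, not_and_or, not_le, not_le] at hk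
  rcases hk with hk | hk
  · rw [hzero (k - 1) (by simp [Set.mem_Icc]; omega), zero_mul]; positivity
  · rw [hzero (k + 1) (by simp [Set.mem_Icc]; omega), mul_zero]; positivity

theorem mul_le_mul_of_mul_le_sq (hzero : ∀ k ∉ Set.Icc m n, a k = 0)
    (hpos : ∀ k ∈ Set.Icc m n, 0 < a k) (hle : ∀ k, a (k - 1) * a (k + 1) ≤ a k ^ 2)
    (k : ℤ) : a (k - 2) * a (k + 1) ≤ a (k - 1) * a k := by
  have ha0 (j : ℤ) : 0 ≤ a j := by
    by_cases hj : j ∈ Set.Icc m n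
    exacts [(hpos j hj).le, (hzero j hj).ge]
  by_cases hk : k - 1 ∈ Set.Icc m n ∧ k ∈ Set.Icc m n
  · have hlc₁ : a (k - 2) * a k ≤ a (k - 1) ^ 2 := by
      simpa [sub_sub, one_add_one_eq_two] using hle (k - 1)
    have hprod := mul_le_mul hlc₁ (hle k) (mul_nonneg (ha0 _) (ha0 _)) (sq_nonneg _)
    refine le_of_mul_le_mul_right (a := a (k - 1) * a k) ?_
      (mul_pos (hpos _ hk.1) (hpos _ hk.2))
    convert hprod using 1 <;> ring
  · simp only [Set.mem_Icc] at hk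
    have hout : a (k - 2) = 0 ∨ a (k + 1) = 0 := by
      by_cases hkm : k - 2 < m
      · exact .inl (hzero _ (by simp [Set.mem_Icc]; omega))
      · exact .inr (hzero _ (by simp [Set.mem_Icc]; omega))
    rcases hout with h | h <;> simp only [h, zero_mul, mul_zero] <;>
      exact mul_nonneg (ha0 _) (ha0 _)

theorem sq_sub_mul_of_eq_add {α β : ℝ} (hc : ∀ k, c k = α * a k + β * a (k - 1)) (k : ℤ) :
    c k ^ 2 - c (k - 1) * c (k + 1) =
      α ^ 2 * (a k ^ 2 - a (k - 1) * a (k + 1)) + β ^ 2 * (a (k - 1) ^ 2 - a (k - 2) * a k)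
        + α * β * (a (k - 1) * a k - a (k - 2) * a (k + 1)) := by
  rw [hc, hc, hc, sub_sub, one_add_one_eq_two, add_sub_cancel_right]
  ring

theorem mul_lt_sq_of_eq_add {α β : ℝ} (hα : 0 < α) (hβ : 0 < β) (hmn : m ≤ n)
    (hzero : ∀ k ∉ Set.Icc m n, a k = 0) (hpos : ∀ k ∈ Set.Icc m n, 0 < a k)
    (hlt : ∀ k ∈ Set.Icc m n, a (k - 1) * a (k + 1) < a k ^ 2)
    (hc : ∀ k, c k = α * a k + β * a (k - 1)) :
    ∀ k ∈ Set.Icc m (n + 1), c (k - 1) * c (k + 1) < c k ^ 2 := by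
  intro k hk
  have hle := mul_le_sq_of_mul_lt_sq_on_Icc hzero hlt
  have hle₁ : a (k - 2) * a k ≤ a (k - 1) ^ 2 := by
    simpa [sub_sub, one_add_one_eq_two] using hle (k - 1)
  have hgap : 0 < α ^ 2 * (a k ^ 2 - a (k - 1) * a (k + 1))
      + β ^ 2 * (a (k - 1) ^ 2 - a (k - 2) * a k) := by
    by_cases hkn : k ≤ n
    · exact add_pos_of_pos_of_nonneg
        (mul_pos (pow_pos hα 2) (sub_pos.2 (hlt k ⟨hk.1, hkn⟩)))
        (mul_nonneg (sq_nonneg β) (sub_nonneg.2 hle₁))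
    · have hk₁ : k - 1 ∈ Set.Icc m n := by
        obtain ⟨hmk, hkn'⟩ := hk
        constructor <;> omega
      have hlt₁ : a (k - 2) * a k < a (k - 1) ^ 2 := by
        simpa [sub_sub, one_add_one_eq_two] using hlt (k - 1) hk₁
      exact add_pos_of_nonneg_of_pos
        (mul_nonneg (sq_nonneg α) (sub_nonneg.2 (hle k)))
        (mul_pos (pow_pos hβ 2) (sub_pos.2 hlt₁))
  have hcross := mul_le_mul_of_mul_le_sq hzero hpos hle k
  nlinarith [sq_sub_mul_of_eq_add hc k, mul_pos hα hβ]

end LogConcave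

section PoissonBinomial

variable {ι : Type*} [DecidableEq ι] {s : Finset ι} {p : ι → ℝ} {k : ℤ}

noncomputable def poissonBinomial (s : Finset ι) (p : ι → ℝ) (k : ℤ) : ℝ :=
  ∑ A ∈ s.powerset with (#A : ℤ) = k, (∏ i ∈ A, p i) * ∏ j ∈ s \ A, (1 - p j)

theorem poissonBinomial_eq_zero (hk : k ∉ Set.Icc 0 (#s : ℤ)) : poissonBinomial s p k = 0 := by
  refine sum_eq_zero fun A hA => ?_
  rw [mem_filter, mem_powerset] at hA
  have := card_le_card hA.1
  simp only [Set.mem_Icc] at hk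
  omega

theorem poissonBinomial_pos (hp : ∀ i ∈ s, 0 < p i ∧ p i < 1) (hk : k ∈ Set.Icc 0 (#s : ℤ)) :
    0 < poissonBinomial s p k := by
  have hterm {A : Finset ι} (hA : A ⊆ s) : 0 < (∏ i ∈ A, p i) * ∏ j ∈ s \ A, (1 - p j) :=
    mul_pos (prod_pos fun i hi => (hp i (hA hi)).1)
      (prod_pos fun j hj => sub_pos.2 (hp j (mem_sdiff.1 hj).1).2)
  obtain ⟨hk₀, hks⟩ := hk
  obtain ⟨B, hBs, hB⟩ := exists_subset_card_eq (s := s) (n := k.toNat) (by omega)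
  refine sum_pos' (fun A hA => (hterm (mem_powerset.1 (mem_filter.1 hA).1)).le)
    ⟨B, mem_filter.2 ⟨mem_powerset.2 hBs, by omega⟩, hterm hBs⟩

theorem poissonBinomial_insert {a : ι} (ha : a ∉ s) (k : ℤ) :
    poissonBinomial (insert a s) p k =
      (1 - p a) * poissonBinomial s p k + p a * poissonBinomial s p (k - 1) := by
  simp only [poissonBinomial, sum_filter, sum_powerset_insert ha, mul_sum, ← sum_add_distrib]
  refine sum_congr rfl fun A hA => ?_
  have haA : a ∉ A := fun h => ha (mem_powerset.1 hA h)
  rw [card_insert_of_notMem haA, insert_sdiff_of_notMem _ haA, insert_sdiff_insert,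
    sdiff_insert_of_notMem ha, prod_insert haA, prod_insert (by simp [ha])]
  split_ifs <;> push_cast at * <;> first | omega | ring

theorem poissonBinomial_mul_lt_sq (hp : ∀ i ∈ s, 0 < p i ∧ p i < 1) :
    ∀ k ∈ Set.Icc 0 (#s : ℤ),
      poissonBinomial s p (k - 1) * poissonBinomial s p (k + 1) < poissonBinomial s p k ^ 2 := by
  induction s using Finset.induction_on with
  | empty =>
    intro k hk
    rw [poissonBinomial_eq_zero (by simp at hk ⊢; omega), zero_mul]
    exact pow_pos (poissonBinomial_pos (by simp) hk) 2
  | insert a s ha ih =>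
    have hp' : ∀ i ∈ s, 0 < p i ∧ p i < 1 := fun i hi => hp i (mem_insert_of_mem hi)
    have hpa := hp a (mem_insert_self a s)
    rw [card_insert_of_notMem ha, Nat.cast_succ]
    exact mul_lt_sq_of_eq_add (sub_pos.2 hpa.2) hpa.1 (by positivity)
      (fun k hk => poissonBinomial_eq_zero hk) (fun k hk => poissonBinomial_pos hp' hk)
      (ih hp') (poissonBinomial_insert ha)

end PoissonBinomial

theorem pbin_eq_poissonBinomial (n : ℕ) (p : Fin n → ℝ) : pbin n p = poissonBinomial univ p := by
  ext k
  simp only [pbin, poissonBinomial, compl_eq_univ_sdiff]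

theorem Real.logb_add_logb_lt_two_mul_logb {b x y z : ℝ} (hb : 1 < b) (hx : 0 < x) (hz : 0 < z)
    (h : x * z < y ^ 2) : Real.logb b x + Real.logb b z < 2 * Real.logb b y := by
  have := Real.logb_lt_logb hb (mul_pos hx hz) h
  rwa [Real.logb_mul hx.ne' hz.ne', Real.logb_pow, Nat.cast_ofNat] at this

theorem pbin_strict_discrete_log_concave_general (n : ℕ) (p : Fin n → ℝ)
    (hp : ∀ i, 0 < p i ∧ p i < 1) (k : ℕ) (hk1 : 2 ≤ k) (hk2 : k ≤ n) :
    Real.logb 2 (pbin n p k) - 2 * Real.logb 2 (pbin n p ((k : ℤ) - 1)) +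
      Real.logb 2 (pbin n p ((k : ℤ) - 2)) < 0 := by
  have hp' : ∀ i ∈ univ, 0 < p i ∧ p i < 1 := fun i _ => hp i
  have hmem {j : ℤ} (hj₀ : (k : ℤ) - 2 ≤ j) (hj : j ≤ k) :
      j ∈ Set.Icc 0 (#(univ : Finset (Fin n)) : ℤ) := by
    simp only [Set.mem_Icc, card_univ, Fintype.card_fin]
    omega
  have hlt := poissonBinomial_mul_lt_sq hp' ((k : ℤ) - 1) (hmem (by omega) (by omega))
  rw [sub_sub, one_add_one_eq_two, sub_add_cancel, mul_comm] at hlt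
  have hlog := Real.logb_add_logb_lt_two_mul_logb one_lt_two
    (poissonBinomial_pos hp' (hmem (by omega) le_rfl))
    (poissonBinomial_pos hp' (hmem le_rfl (by omega))) hlt
  rw [pbin_eq_poissonBinomial]
  linarith

/-- Strict discrete log-concavity of the Poisson–binomial distribution:
`Δ²_k (log₂ b(k,p)) < 0` for `2 ≤ k ≤ n` and `p` in the open cube. -/
theorem pbin_strict_discrete_log_concave (n : ℕ) (hn : 2 ≤ n) (p : Fin n → ℝ)
    (hp : ∀ i, 0 < p i ∧ p i < 1) (k : ℕ) (hk1 : 2 ≤ k) (hk2 : k ≤ n) :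
    Real.logb 2 (pbin n p k) - 2 * Real.logb 2 (pbin n p ((k : ℤ) - 1)) +
      Real.logb 2 (pbin n p ((k : ℤ) - 2)) < 0 :=
  pbin_strict_discrete_log_concave_general n p hp k hk1 hk2
end
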